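/- arXiv:1307.5116 — 3 statements merged into one kernel-verified Lean document; each statement's English description precedes it below -/
import Mathlib

section
/- Let q be a prime number, S a finite set, F : S → S a map whose q-th iterate is the identity (F^[q] = id), and d : S → ℝ a function invariant under F, i.e. d(F(s)) = d(s) for all s ∈ S. For each value v attained by d, let n_v denote the cardinality of {s ∈ S : d(s) = v}, and let m_v be the reduction of n_v modulo q (so 0 ≤ m_v < q). Then the sum of m_v over all distinct values v attained by d is at most the cardinality of Fix(F) = {s ∈ S : F(s) = s}. -/
/-! Non-trivial orbits of a map `F` with `F^[q] = id`, `q` prime, have size exactly `q`, so the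
cardinality of any finite `F`-invariant set is congruent modulo `q` to its number of fixed points.
Apply this to each fibre of `d` and sum over the fibres. -/

open Function Finset

theorem Function.card_mod_le_card_fixedPoints {α : Type*} [Finite α] {p : ℕ} (hp : p.Prime)
    {f : α → α} (hf : f^[p] = id) : Nat.card α % p ≤ Nat.card (fixedPoints f) := by
  classical
  have := Fintype.ofFinite α
  have := Fact.mk hp
  have hmod := Equiv.Perm.card_fixedPoints_modEq (f := f) (n := 1) (by rw [pow_one]; exact hf)
  simp only [Nat.card_eq_fintype_card]
  exact hmod ▸ Nat.mod_le _ _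

theorem Function.card_fiber_mod_le_card_fixedPoints_fiber {α β : Type*} [Finite α] {p : ℕ}
    (hp : p.Prime) {f : α → α} (hf : f^[p] = id) (d : α → β) (hd : ∀ a, d (f a) = d a) (b : β) :
    Nat.card {a // d a = b} % p ≤ Nat.card {a // f a = a ∧ d a = b} := by
  have hmaps : Set.MapsTo f (d ⁻¹' {b}) (d ⁻¹' {b}) := fun a ha => (hd a).trans ha
  have hrestrict : (hmaps.restrict f _ _)^[p] = id := by
    rw [hmaps.iterate_restrict]
    ext
    simp [hf]
  calc Nat.card {a // d a = b} % p ≤ Nat.card (fixedPoints (hmaps.restrict f _ _)) :=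
        card_mod_le_card_fixedPoints hp hrestrict
    _ = Nat.card {a // f a = a ∧ d a = b} :=
        Nat.card_congr
          { toFun x := ⟨x.1.1, congrArg Subtype.val x.2, x.1.2⟩
            invFun x := ⟨⟨x.1, x.2.2⟩, Subtype.ext x.2.1⟩ }

theorem Nat.card_subtype_eq_sum_card_fiber {α β : Type*} [Fintype α] [DecidableEq β]
    (P : α → Prop) (d : α → β) :
    Nat.card {a // P a} = ∑ b ∈ univ.image d, Nat.card {a // P a ∧ d a = b} := by
  classical
  simp only [Nat.card_eq_fintype_card, Fintype.card_subtype]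
  rw [card_eq_sum_card_fiberwise (f := d) (t := univ.image d)
    (fun a _ => mem_image_of_mem d (mem_univ a))]
  simp [filter_filter]

/-- If `q` is prime, `S` is finite, `F : S → S` satisfies `F^[q] = id`, and
`d : S → ℝ` is `F`-invariant, then the sum over all values `v` attained by `d`
of the mod-`q` reduction of the multiplicity `n_v = |{s : d s = v}|` is at most
the number of fixed points of `F`. -/
theorem sum_mod_multiplicities_le_card_fixed {S : Type*} [Fintype S]
    (q : ℕ) (hq : q.Prime) (F : S → S) (hF : F^[q] = id)
    (d : S → ℝ) (hd : ∀ s, d (F s) = d s) :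
    ∑ v ∈ Finset.image d Finset.univ, (Nat.card {s : S // d s = v}) % q
      ≤ Nat.card {s : S // F s = s} := by
  rw [Nat.card_subtype_eq_sum_card_fiber (fun s => F s = s) d]
  exact sum_le_sum fun v _ => card_fiber_mod_le_card_fixedPoints_fiber hq hF d hd v
end

section
/- Let q and ℓ be distinct prime numbers, A a finite additive abelian group, and F : A ≃+ A an additive automorphism of A whose q-th iterate is the identity. Assume that the only ℓ-primary element of A fixed by F is 0; that is, if s ∈ A satisfies ℓⁿ • s = 0 for some natural number n and F(s) = s, then s = 0. Let d : A → ℝ be a function with d(F(s)) = d(s) for all s ∈ A. Then for every real number v, q divides the cardinality of the set {s ∈ A : s ≠ 0, ℓⁿ • s = 0 for some n, and d(s) = v}. -/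
/-! `F` preserves the set of nonzero ℓ-primary elements on which `d` takes the value `v`, and
on that set it has no fixed points. Since `F^[q] = id` with `q` prime, every orbit of `F` there
has exactly `q` elements. -/

open Function Set

theorem Function.prime_dvd_card_of_iterate_eq_id {α : Type*} [Finite α] {p : ℕ} [Fact p.Prime]
    {f : α → α} (hf : f^[p] = id) (hfix : ∀ x, ¬IsFixedPt f x) : p ∣ Nat.card α := by
  classical
  have := Fintype.ofFinite α
  let g : Function.End α := f
  have hg : g ^ p ^ 1 = 1 := by rw [pow_one]; exact hf
  have : IsEmpty (fixedPoints f) := ⟨fun x => hfix x x.2⟩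
  simpa [Nat.card_eq_fintype_card, Nat.modEq_zero_iff_dvd] using
    Equiv.Perm.card_fixedPoints_modEq hg

theorem AddEquiv.exists_pow_nsmul_map_eq_zero_iff {A B : Type*} [AddCommMonoid A]
    [AddCommMonoid B] (F : A ≃+ B) (k : ℕ) (s : A) :
    (∃ n : ℕ, (k ^ n : ℕ) • F s = 0) ↔ ∃ n : ℕ, (k ^ n : ℕ) • s = 0 := by
  simp only [← map_nsmul, map_eq_zero_iff F F.injective]

theorem card_ellPrimary_value_set_dvd_general {A : Type*} [AddCommGroup A] [Fintype A]
    (q ℓ : ℕ) (hq : q.Prime)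
    (F : A ≃+ A) (hF : (F : A → A)^[q] = id)
    (hfix : ∀ s : A, (∃ n : ℕ, (ℓ ^ n : ℕ) • s = 0) → F s = s → s = 0)
    (d : A → ℝ) (hd : ∀ s, d (F s) = d s) (v : ℝ) :
    q ∣ Nat.card {s : A // s ≠ 0 ∧ (∃ n : ℕ, (ℓ ^ n : ℕ) • s = 0) ∧ d s = v} := by
  have : Fact q.Prime := ⟨hq⟩
  let S : Set A := {s | s ≠ 0 ∧ (∃ n : ℕ, (ℓ ^ n : ℕ) • s = 0) ∧ d s = v}
  have hS : MapsTo F S S := fun s ⟨hs0, hsℓ, hsv⟩ =>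
    ⟨(map_ne_zero_iff F F.injective).2 hs0, (F.exists_pow_nsmul_map_eq_zero_iff ℓ s).2 hsℓ,
      (hd s).trans hsv⟩
  refine prime_dvd_card_of_iterate_eq_id (f := hS.restrict) ?_ fun s hs => ?_
  · ext s
    rw [hS.iterate_restrict]
    exact congrFun hF s
  · exact s.2.1 (hfix s s.2.2.1 (congrArg Subtype.val hs))

/-- Let `q ≠ ℓ` be primes, `A` a finite abelian group, and `F` an automorphism
of `A` with `F^[q] = id` whose only fixed ℓ-primary element is `0`. If
`d : A → ℝ` is `F`-invariant, then for every real `v` the number of nonzero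
ℓ-primary elements `s` with `d s = v` is divisible by `q`. -/
theorem card_ellPrimary_value_set_dvd {A : Type*} [AddCommGroup A] [Fintype A]
    (q ℓ : ℕ) (hq : q.Prime) (hℓ : ℓ.Prime) (hqℓ : q ≠ ℓ)
    (F : A ≃+ A) (hF : (F : A → A)^[q] = id)
    (hfix : ∀ s : A, (∃ n : ℕ, (ℓ ^ n : ℕ) • s = 0) → F s = s → s = 0)
    (d : A → ℝ) (hd : ∀ s, d (F s) = d s) (v : ℝ) :
    q ∣ Nat.card {s : A // s ≠ 0 ∧ (∃ n : ℕ, (ℓ ^ n : ℕ) • s = 0) ∧ d s = v} :=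
  card_ellPrimary_value_set_dvd_general q ℓ hq F hF hfix d hd v
end

section
/- Let q be a prime number, k ≥ 1 a natural number, H an additive subgroup of ℤ/q^kℤ, and B a finite additive abelian group. Suppose there are additive homomorphisms π : H → B and μ : B → ℤ/q^kℤ such that μ(π(h)) = q • h (viewing h as an element of ℤ/q^kℤ) for every h ∈ H. Then |H| ≤ q · |B|. -/
/-!
The composite `μ ∘ π` is multiplication by `q` on `H`, so its kernel is killed by `q`. A subgroup
of a cyclic group is cyclic, hence has order equal to its exponent, so this kernel has at most `q`
elements, while the image of `μ ∘ π` has at most `|B|` elements.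
-/

theorem AddMonoidHom.card_le_card_ker_comp_mul_card {G B C : Type*} [AddGroup G] [AddGroup B]
    [AddGroup C] [Finite B] (f : G →+ B) (g : B →+ C) :
    Nat.card G ≤ Nat.card (g.comp f).ker * Nat.card B := by
  rw [← (g.comp f).ker.card_mul_index, AddSubgroup.index_ker]
  refine Nat.mul_le_mul_left _ ?_
  have hrange : ((g.comp f).range : Set C) ⊆ Set.range g := by
    rintro _ ⟨x, rfl⟩
    exact ⟨f x, rfl⟩
  calc Nat.card (g.comp f).range ≤ Nat.card (Set.range g) :=
        Nat.card_mono (Set.finite_range g) hrange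
    _ ≤ Nat.card B := Finite.card_range_le g

theorem IsAddCyclic.card_le_of_forall_nsmul_eq_zero {G : Type*} [AddGroup G] [IsAddCyclic G]
    {n : ℕ} (hn : n ≠ 0) (h : ∀ g : G, n • g = 0) : Nat.card G ≤ n := by
  rw [← IsAddCyclic.exponent_eq_card]
  exact Nat.le_of_dvd (Nat.pos_of_ne_zero hn) (AddMonoid.exponent_dvd_of_forall_nsmul_eq_zero h)

theorem AddSubgroup.card_le_mul_card_of_forall_comp_eq_nsmul {C B : Type*} [AddGroup C]
    [IsAddCyclic C] [AddGroup B] [Finite B] {H : AddSubgroup C} (π : H →+ B) (μ : B →+ C)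
    {n : ℕ} (hn : n ≠ 0) (hμ : ∀ h : H, μ (π h) = n • (h : C)) :
    Nat.card H ≤ n * Nat.card B := by
  have hker : ∀ h : (μ.comp π).ker, n • h = 0 := fun ⟨h, hh⟩ =>
    Subtype.ext <| Subtype.ext <| by simpa using (hμ h).symm.trans hh
  calc Nat.card H ≤ Nat.card (μ.comp π).ker * Nat.card B := π.card_le_card_ker_comp_mul_card μ
    _ ≤ n * Nat.card B :=
      Nat.mul_le_mul_right _ (IsAddCyclic.card_le_of_forall_nsmul_eq_zero hn hker)

theorem card_subgroup_le_of_transfer_cyclic_general (q : ℕ) (hq : q.Prime)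
    (k : ℕ) (H : AddSubgroup (ZMod (q ^ k)))
    {B : Type*} [AddCommGroup B] [Fintype B]
    (π : H →+ B) (μ : B →+ ZMod (q ^ k))
    (hμ : ∀ h : H, μ (π h) = q • (h : ZMod (q ^ k))) :
    Nat.card H ≤ q * Nat.card B :=
  H.card_le_mul_card_of_forall_comp_eq_nsmul π μ hq.ne_zero hμ

/-- Transfer-map inequality in the cyclic case: if `q` is prime, `k ≥ 1`,
`H` is a subgroup of `ℤ/q^kℤ`, and there are homomorphisms `π : H → B`,
`μ : B → ℤ/q^kℤ` with `μ (π h) = q • h` for all `h ∈ H`, then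
`|H| ≤ q * |B|`. -/
theorem card_subgroup_le_of_transfer_cyclic (q : ℕ) (hq : q.Prime)
    (k : ℕ) (hk : 1 ≤ k) (H : AddSubgroup (ZMod (q ^ k)))
    {B : Type*} [AddCommGroup B] [Fintype B]
    (π : H →+ B) (μ : B →+ ZMod (q ^ k))
    (hμ : ∀ h : H, μ (π h) = q • (h : ZMod (q ^ k))) :
    Nat.card H ≤ q * Nat.card B :=
  card_subgroup_le_of_transfer_cyclic_general q hq k H π μ hμ
end
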